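/- There is no smoothly embedded 2-sphere in the rational elliptic surface $E(1)$ representing the fiber class $[F]$; consequently there is no splitting of pairs $(E(1), P^2) \cong (E(1), S^2) \# (S^4, P^2)$, where $P^2 \subset E(1)$ is the embedded projective plane representing $[F]$ obtained by capping the M\"obius band bounded by the right-handed trefoil with the core of the attached 0-framed 2-handle. -/
import Mathlib

/-- There is no smoothly embedded 2-sphere in the rational elliptic
surface `E(1)` representing the fiber class `[F]`; consequently there is no
splitting of pairs `(E(1), P²) ≅ (E(1), S²) # (S⁴, P²)` for the projective plane
`P² ⊂ E(1)` representing `[F]`.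

Abstract model: `H = H₂(E(1);ℤ)` with intersection form `Q` and signature `σ = -8`;
the Kervaire–Milnor theorem says a characteristic class represented by a smoothly
embedded sphere satisfies `Q c c ≡ σ (mod 16)`; the fiber class `f` is
characteristic with `Q f f = 0`; a splitting as above would produce a smoothly
embedded sphere representing `f`. -/
theorem stmt10
    (H : Type) [AddCommGroup H]
    (Q : H → H → ℤ) (σ : ℤ)
    (Characteristic : H → Prop)
    (RepresentedByEmbeddedSphere : H → Prop)
    -- the Kervaire–Milnor theorem
    (KM : ∀ c, Characteristic c → RepresentedByEmbeddedSphere c →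
      (Q c c - σ) % 16 = 0)
    (f : H)                                  -- the fiber class [F]
    (hf : Characteristic f) (hQf : Q f f = 0) (hσ : σ = -8)
    (SplittingExists : Prop)                 -- (E(1),P²) ≅ (E(1),S²) # (S⁴,P²)
    (hsplit : SplittingExists → RepresentedByEmbeddedSphere f) :
    ¬ RepresentedByEmbeddedSphere f ∧ ¬ SplittingExists := by
  have h : ¬ RepresentedByEmbeddedSphere f := by
    intro hr
    have := KM f hf hr
    rw [hQf, hσ] at this
    norm_num at this
  exact ⟨h, fun hs => h (hsplit hs)⟩
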